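/- All second-order partial derivatives of γ with respect to a, b, c vanish at (a,b,c)=(x,y,z), i.e., the BMSS dual curve γ_Q(a:b:c)=0 of degree 5 has a point of multiplicity at least 3 at the general point Q=(x:y:z). -/
import Mathlib


open MvPolynomial

/-- `γ` viewed as a polynomial in the variables `a,b,c` (indexed `0,1,2`),
with `x,y,z` as parameters. -/
noncomputable def gammaQ (x y z : ℂ) : MvPolynomial (Fin 3) ℂ :=
  (X 0) ^ 2 * (5 * (X 2) ^ 3 - (X 0) ^ 3) * C (x * (y ^ 6 - z ^ 6)) +
  (X 1) ^ 2 * ((X 1) ^ 3 - 5 * (X 2) ^ 3) * C (y * (x ^ 6 - z ^ 6)) +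
  (X 2) ^ 2 * ((X 2) ^ 3 - 5 * (X 0) ^ 3) *
    C (z * (x ^ 3 + y ^ 3) * (y ^ 3 + z ^ 3)) +
  (X 2) ^ 2 * (5 * (X 1) ^ 3 - (X 2) ^ 3) *
    C (z * (x ^ 3 + y ^ 3) * (x ^ 3 + z ^ 3)) +
  5 * (X 1) ^ 2 * ((X 0) ^ 3 - (X 2) ^ 3) *
    C (y * (x ^ 3 + z ^ 3) * (y ^ 3 + z ^ 3)) +
  5 * (X 0) ^ 2 * ((X 2) ^ 3 - (X 1) ^ 3) *
    C (x * (x ^ 3 + z ^ 3) * (y ^ 3 + z ^ 3))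

lemma pderiv_ofNat' (i : Fin 3) (n : ℕ) [n.AtLeastTwo] :
    pderiv i (OfNat.ofNat n : MvPolynomial (Fin 3) ℂ) = 0 := by
  rw [← map_ofNat (C : ℂ →+* MvPolynomial (Fin 3) ℂ) n, pderiv_C]

lemma pderiv_natCast' (i : Fin 3) (n : ℕ) :
    pderiv i (n : MvPolynomial (Fin 3) ℂ) = 0 := by
  rw [← map_natCast (C : ℂ →+* MvPolynomial (Fin 3) ℂ) n, pderiv_C]

lemma pderiv_five (i : Fin 3) :
    pderiv i (5 : MvPolynomial (Fin 3) ℂ) = 0 := by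
  rw [show (5 : MvPolynomial (Fin 3) ℂ) = C 5 from (map_ofNat (C : ℂ →+* MvPolynomial (Fin 3) ℂ) 5).symm, pderiv_C]

set_option maxHeartbeats 4000000 in
/-- All partials of order ≤ 2 of `γ` with respect to `a,b,c` vanish at
`(a,b,c) = (x,y,z)`: the BMSS dual quintic has multiplicity ≥ 3 at `(x:y:z)`. -/
theorem stmt11 (x y z : ℂ) :
    eval ![x, y, z] (gammaQ x y z) = 0 ∧
    (∀ i : Fin 3, eval ![x, y, z] (pderiv i (gammaQ x y z)) = 0) ∧
    (∀ i j : Fin 3,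
      eval ![x, y, z] (pderiv i (pderiv j (gammaQ x y z))) = 0) := by
  have e0 : (![x, y, z] : Fin 3 → ℂ) 0 = x := rfl
  have e1 : (![x, y, z] : Fin 3 → ℂ) 1 = y := rfl
  have e2 : (![x, y, z] : Fin 3 → ℂ) 2 = z := rfl
  refine ⟨?_, ?_, ?_⟩
  · simp only [gammaQ, map_add, map_mul, map_sub, map_pow, map_ofNat, eval_C, eval_X,
      e0, e1, e2]
    ring
  · intro i
    fin_cases i <;>
    · simp only [gammaQ, pderiv_mul, pderiv_C, pderiv_X, pderiv_ofNat', pderiv_natCast', pderiv_five, pderiv_pow, map_ofNat, map_add,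
        map_sub, map_mul, map_pow, map_zero, map_one, eval_C, eval_X, Pi.single_apply,
        Fin.isValue, show ((0:Fin 3) = 0) = True from by simp,
        show ((1:Fin 3) = 0) = False from by simp, show ((2:Fin 3) = 0) = False from by simp,
        show ((0:Fin 3) = 1) = False from by simp, show ((1:Fin 3) = 1) = True from by simp,
        show ((2:Fin 3) = 1) = False from by simp, show ((0:Fin 3) = 2) = False from by simp,
        show ((1:Fin 3) = 2) = False from by simp, show ((2:Fin 3) = 2) = True from by simp,
        if_true, if_false, mul_zero, zero_mul, mul_one, one_mul, add_zero, zero_add,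
        sub_zero, e0, e1, e2]
      simp [Fin.ext_iff]
      ring
  · intro i j
    fin_cases i <;> fin_cases j <;>
    · simp only [gammaQ, pderiv_mul, pderiv_C, pderiv_X, pderiv_ofNat', pderiv_natCast', pderiv_five, pderiv_pow, map_ofNat, map_add,
        map_sub, map_mul, map_pow, map_zero, map_one, eval_C, eval_X, Pi.single_apply,
        Fin.isValue, show ((0:Fin 3) = 0) = True from by simp,
        show ((1:Fin 3) = 0) = False from by simp, show ((2:Fin 3) = 0) = False from by simp,
        show ((0:Fin 3) = 1) = False from by simp, show ((1:Fin 3) = 1) = True from by simp,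
        show ((2:Fin 3) = 1) = False from by simp, show ((0:Fin 3) = 2) = False from by simp,
        show ((1:Fin 3) = 2) = False from by simp, show ((2:Fin 3) = 2) = True from by simp,
        if_true, if_false, mul_zero, zero_mul, mul_one, one_mul, add_zero, zero_add,
        sub_zero, e0, e1, e2]
      simp [Fin.ext_iff]
      ring
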